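/- Let X be a fan with top t. If for each x ∈ X − {t} we have (tx) ∩ S(X) ≠ ∅, then E(X) ⊆ S(X). -/

import Mathlib

open Set Filter Topology Metric

namespace FansHomogeneity

/-- `A` is an arc in `X` with endpoints `p` and `q`. -/
def IsArcWith {X : Type*} [TopologicalSpace X] (A : Set X) (p q : X) : Prop :=
  ∃ h : unitInterval ≃ₜ A, (h 0 : X) = p ∧ (h 1 : X) = q

/-- `A` is the (possibly degenerate) arc with endpoints `p` and `q`:
either `p = q` and `A = {p}`, or `A` is an arc from `p` to `q`. -/
def IsArcOrPt {X : Type*} [TopologicalSpace X] (A : Set X) (p q : X) : Prop :=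
  (p = q ∧ A = {p}) ∨ IsArcWith A p q

/-- A subcontinuum of a space: a nonempty compact connected subset. -/
def IsSubcontinuum {X : Type*} [TopologicalSpace X] (A : Set X) : Prop :=
  IsCompact A ∧ IsConnected A

/-- A space is hereditarily unicoherent if the intersection of any two subcontinua
is connected. -/
def HereditarilyUnicoherent (X : Type*) [TopologicalSpace X] : Prop :=
  ∀ A B : Set X, IsSubcontinuum A → IsSubcontinuum B → IsPreconnected (A ∩ B)

/-- A space is arcwise connected if any two distinct points are the endpoints of an arc. -/
def ArcwiseConnected (X : Type*) [TopologicalSpace X] : Prop :=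
  ∀ p q : X, p ≠ q → ∃ A : Set X, IsArcWith A p q

/-- A dendroid: an arcwise connected, hereditarily unicoherent continuum
(nonempty compact connected metric space). -/
def IsDendroid (X : Type*) [MetricSpace X] : Prop :=
  CompactSpace X ∧ ConnectedSpace X ∧ ArcwiseConnected X ∧ HereditarilyUnicoherent X

/-- `p` has order at least `n`: `p` is a common endpoint of `n` arcs in `X` which
pairwise intersect only in `p`. -/
def OrderGe (X : Type*) [TopologicalSpace X] (p : X) (n : ℕ) : Prop :=
  ∃ F : Fin n → Set X, (∀ i, ∃ q : X, IsArcWith (F i) p q) ∧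
    ∀ i j, i ≠ j → F i ∩ F j = {p}

/-- The endpoints of `X`: points of order exactly `1`. -/
def endpoints (X : Type*) [TopologicalSpace X] : Set X :=
  {p | OrderGe X p 1 ∧ ¬ OrderGe X p 2}

/-- The ordinary points of `X`: points of order exactly `2`. -/
def ordinaryPoints (X : Type*) [TopologicalSpace X] : Set X :=
  {p | OrderGe X p 2 ∧ ¬ OrderGe X p 3}

/-- The ramification points of `X`: points of order greater than `2`. -/
def ramificationPoints (X : Type*) [TopologicalSpace X] : Set X :=
  {p | OrderGe X p 3}

/-- A fan with top `t`: a dendroid whose unique ramification point is `t`. -/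
def IsFanWithTop (X : Type*) [MetricSpace X] (t : X) : Prop :=
  IsDendroid X ∧ ramificationPoints X = {t}

/-- A fan: a dendroid with exactly one ramification point. -/
def IsFan (X : Type*) [MetricSpace X] : Prop :=
  ∃ t : X, IsFanWithTop X t

/-- The orbit of a point under the action of the homeomorphism group of `X`. -/
def orbit (X : Type*) [TopologicalSpace X] (x : X) : Set X :=
  {y | ∃ h : X ≃ₜ X, h x = y}

/-- `A` is an orbit of the action of the homeomorphism group of `X` on `X`. -/
def IsOrbit (X : Type*) [TopologicalSpace X] (A : Set X) : Prop :=
  ∃ x : X, A = orbit X x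

/-- The set of orbits of the action of the homeomorphism group of `X` on `X`. -/
def orbits (X : Type*) [TopologicalSpace X] : Set (Set X) :=
  {A | IsOrbit X A}

/-- `X` is `1/n`-homogeneous (has homogeneity degree `n`): the action of the
homeomorphism group of `X` on `X` has exactly `n` orbits. -/
def OneOverHomogeneous (X : Type*) [TopologicalSpace X] (n : ℕ) : Prop :=
  (orbits X).ncard = n

/-- A fan `X` with top `t` is smooth at `t` with respect to `a` if for every sequence
converging to `a` the arcs from `t` converge, in the Hausdorff metric, to the arc `t a`. -/
def SmoothAt (X : Type*) [MetricSpace X] (t a : X) : Prop :=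
  ∀ (α : ℕ → X) (A : ℕ → Set X) (B : Set X),
    Tendsto α atTop (nhds a) → (∀ n, IsArcOrPt (A n) t (α n)) → IsArcOrPt B t a →
    Tendsto (fun n => hausdorffDist (A n) B) atTop (nhds 0)

/-- `S(X)`: the set of points `a` such that `X` is smooth at the top `t` with respect to `a`. -/
def smoothSet (X : Type*) [MetricSpace X] (t : X) : Set X :=
  {a | SmoothAt X t a}

/-- A smooth fan with top `t`. -/
def IsSmoothFanWithTop (X : Type*) [MetricSpace X] (t : X) : Prop :=
  IsFanWithTop X t ∧ smoothSet X t = univ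

/-- A smooth fan. -/
def IsSmoothFan (X : Type*) [MetricSpace X] : Prop :=
  ∃ t : X, IsSmoothFanWithTop X t

/-- The relation on `cantorSet × [0,1]` generating the identification of
`cantorSet × {1}` to a point. -/
def cantorFanRel (a b : ↥cantorSet × unitInterval) : Prop :=
  a.2 = 1 ∧ b.2 = 1

/-- The Cantor fan: the quotient `(C × [0,1]) / (C × {1})` where `C` is the
middle-thirds Cantor set. -/
def CantorFan : Type := Quot cantorFanRel

instance : TopologicalSpace CantorFan :=
  instTopologicalSpaceQuot

/-- The fan `F_ω ⊆ ℝ²`: the union of the segments from `(0,0)` to `(1/i, 1/i²)`, `i ≥ 1`. -/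
def Fomega : Set (ℝ × ℝ) :=
  ⋃ i : ℕ, segment ℝ ((0, 0) : ℝ × ℝ) ((1 / ((i : ℝ) + 1), 1 / ((i : ℝ) + 1) ^ 2) : ℝ × ℝ)

/-- The shrinking Cantor fan `F_{C_ω} ⊆ ℝ²`: for each `i ≥ 1` the union of the segments
from the origin to `(c, 1/2^(i-1))` for `c ∈ C ∩ [(3^(i-1)-1)/3^(i-1), (3^i-2)/3^i]`
(here indexed by `i - 1 ∈ ℕ`). -/
def shrinkingCantorFan : Set (ℝ × ℝ) :=
  ⋃ i : ℕ, ⋃ c ∈ cantorSet ∩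
      Icc (((3 : ℝ) ^ i - 1) / 3 ^ i) (((3 : ℝ) ^ (i + 1) - 2) / 3 ^ (i + 1)),
    segment ℝ ((0, 0) : ℝ × ℝ) ((c, (1 / 2 : ℝ) ^ i) : ℝ × ℝ)

/-- `S` is a simple `n`-od in the plane: the union of `n` straight line segments
which pairwise intersect exactly in a common endpoint. -/
def IsSimpleNod (n : ℕ) (S : Set (ℝ × ℝ)) : Prop :=
  ∃ (o : ℝ × ℝ) (b : Fin n → ℝ × ℝ),
    (∀ i, b i ≠ o) ∧
    S = ⋃ i, segment ℝ o (b i) ∧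
    ∀ i j, i ≠ j → segment ℝ o (b i) ∩ segment ℝ o (b j) = {o}

/-- `X` is colocally connected at `p`: every neighborhood of `p` contains a
neighborhood `V` of `p` such that `X - V` is connected. -/
def ColocallyConnectedAt (X : Type*) [TopologicalSpace X] (p : X) : Prop :=
  ∀ U ∈ nhds p, ∃ V ∈ nhds p, V ⊆ U ∧ IsPreconnected Vᶜ

/-- `X` is homeomorphic to the Lelek fan, i.e. to a smooth fan whose set of
endpoints is dense in it. -/
def HomeoToLelekFan (X : Type*) [TopologicalSpace X] : Prop :=
  ∃ (Y : Type) (m : MetricSpace Y),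
    @IsSmoothFan Y m ∧
    @Dense Y (@UniformSpace.toTopologicalSpace Y
        (@PseudoMetricSpace.toUniformSpace Y m.toPseudoMetricSpace))
      (@endpoints Y (@UniformSpace.toTopologicalSpace Y
        (@PseudoMetricSpace.toUniformSpace Y m.toPseudoMetricSpace))) ∧
    Nonempty (@Homeomorph X Y _ (@UniformSpace.toTopologicalSpace Y
        (@PseudoMetricSpace.toUniformSpace Y m.toPseudoMetricSpace)))

/-! Let `e` be an endpoint and `α n → e`. Every Hausdorff limit `L` of a subsequence of the arcs
`t (α n)` is a continuum containing `t` and `e`, hence, by hereditary unicoherence, the arc `t e`.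
If `L` contained a point `z` off `t e`, then `t z ⊆ L` would meet `t e` only in `t`: the last
point of `t z` on `t e` would otherwise be a ramification point, or would give `e` order two.
Pick smooth points `s ∈ (t e)` and `s' ∈ (t z)` and approximate them by points `b n`, `b' n` of
the arcs; by smoothness the subarcs `t (b n)` and `t (b' n)` converge to `t s` and `t s'`, and
since one of the two subarcs always contains the other, `s ∈ t s'` or `s' ∈ t s`, which is
impossible. So `L = t e`, and by compactness of the hyperspace the arcs `t (α n)` converge to
`t e`. -/

open TopologicalSpace
open scoped unitInterval

section Arcs

variable {X : Type*} [TopologicalSpace X] {A : Set X} {p q : X}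

theorem IsArcWith.exists_isEmbedding (h : IsArcWith A p q) :
    ∃ f : I → X, IsEmbedding f ∧ range f = A ∧ f 0 = p ∧ f 1 = q := by
  obtain ⟨e, h0, h1⟩ := h
  exact ⟨fun u => (e u : X), IsEmbedding.subtypeVal.comp e.isEmbedding,
    (e.surjective.range_comp _).trans Subtype.range_coe, h0, h1⟩

theorem isArcWith_range {f : I → X} (hf : IsEmbedding f) : IsArcWith (range f) (f 0) (f 1) :=
  ⟨hf.toHomeomorph, rfl, rfl⟩

theorem IsArcWith.symm (h : IsArcWith A p q) : IsArcWith A q p := by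
  obtain ⟨e, h0, h1⟩ := h
  exact ⟨unitInterval.symmHomeomorph.trans e, by simpa using h1, by simpa using h0⟩

theorem IsArcWith.ne (h : IsArcWith A p q) : p ≠ q := by
  obtain ⟨f, hf, -, rfl, rfl⟩ := h.exists_isEmbedding
  exact hf.injective.ne (by simp)

theorem IsArcWith.isCompact (h : IsArcWith A p q) : IsCompact A := by
  obtain ⟨f, hf, rfl, -, -⟩ := h.exists_isEmbedding
  exact isCompact_range hf.continuous

theorem IsArcWith.isConnected (h : IsArcWith A p q) : IsConnected A := by
  obtain ⟨f, hf, rfl, -, -⟩ := h.exists_isEmbedding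
  exact isConnected_range hf.continuous

theorem IsArcWith.left_mem (h : IsArcWith A p q) : p ∈ A := by
  obtain ⟨f, -, rfl, rfl, -⟩ := h.exists_isEmbedding
  exact mem_range_self 0

theorem IsArcWith.right_mem (h : IsArcWith A p q) : q ∈ A :=
  h.symm.left_mem

theorem IsArcOrPt.isCompact (h : IsArcOrPt A p q) : IsCompact A := by
  rcases h with ⟨-, rfl⟩ | h
  exacts [isCompact_singleton, h.isCompact]

theorem IsArcOrPt.isPreconnected (h : IsArcOrPt A p q) : IsPreconnected A := by
  rcases h with ⟨-, rfl⟩ | h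
  exacts [isPreconnected_singleton, h.isConnected.isPreconnected]

theorem IsArcOrPt.left_mem (h : IsArcOrPt A p q) : p ∈ A := by
  rcases h with ⟨-, rfl⟩ | h
  exacts [rfl, h.left_mem]

theorem IsArcOrPt.right_mem (h : IsArcOrPt A p q) : q ∈ A := by
  rcases h with ⟨rfl, rfl⟩ | h
  exacts [rfl, h.right_mem]

theorem isArcWith_image_Icc {f : I → X} (hf : IsEmbedding f) {a b : I} (hab : a < b) :
    IsArcWith (f '' Icc a b) (f a) (f b) := by
  have hab' : (a : ℝ) < b := hab
  let φ : I → I := fun u => ⟨a + u * (b - a), by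
    constructor <;> nlinarith [a.2.1, b.2.2, u.2.1, u.2.2]⟩
  have hφ : Continuous φ := by fun_prop
  have hφinj : Function.Injective φ := fun u v huv => Subtype.ext <|
    mul_right_cancel₀ (sub_ne_zero.2 hab'.ne') (add_left_cancel (congrArg Subtype.val huv))
  have hφ0 : φ 0 = a := Subtype.ext (by simp [φ])
  have hφ1 : φ 1 = b := Subtype.ext (by simp [φ])
  have hrange : range φ = Icc a b := by
    refine Subset.antisymm ?_ ?_
    · rintro _ ⟨u, rfl⟩
      constructor <;> show (_ : ℝ) ≤ _ <;> simp only [φ] <;> nlinarith [u.2.1, u.2.2]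
    · exact (isPreconnected_range hφ).Icc_subset (hφ0 ▸ mem_range_self 0)
        (hφ1 ▸ mem_range_self 1)
  have := isArcWith_range (hf.comp (hφ.isClosedEmbedding hφinj).isEmbedding)
  rwa [range_comp, hrange, Function.comp_apply, Function.comp_apply, hφ0, hφ1] at this

theorem isArcOrPt_image_Icc_zero {f : I → X} (hf : IsEmbedding f) (u : I) :
    IsArcOrPt (f '' Icc 0 u) (f 0) (f u) := by
  rcases (show (0 : I) ≤ u from unitInterval.nonneg').eq_or_lt with rfl | hu
  · exact Or.inl ⟨rfl, by simp⟩
  · exact Or.inr (isArcWith_image_Icc hf hu)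

theorem IsArcWith.exists_subarc (h : IsArcWith A p q) {x : X} (hx : x ∈ A) :
    ∃ C ⊆ A, IsArcOrPt C p x := by
  obtain ⟨f, hf, rfl, rfl, -⟩ := h.exists_isEmbedding
  obtain ⟨u, rfl⟩ := hx
  exact ⟨_, image_subset_range _ _, isArcOrPt_image_Icc_zero hf u⟩

theorem IsArcOrPt.exists_nested_subarcs (h : IsArcOrPt A p q) {x y : X} (hx : x ∈ A)
    (hy : y ∈ A) : ∃ C D, IsArcOrPt C p x ∧ IsArcOrPt D p y ∧ (C ⊆ D ∨ D ⊆ C) := by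
  rcases h with ⟨rfl, rfl⟩ | h
  · rw [mem_singleton_iff] at hx hy
    subst hx hy
    exact ⟨_, _, Or.inl ⟨rfl, rfl⟩, Or.inl ⟨rfl, rfl⟩, Or.inl subset_rfl⟩
  obtain ⟨f, hf, rfl, rfl, -⟩ := h.exists_isEmbedding
  obtain ⟨u, rfl⟩ := hx
  obtain ⟨v, rfl⟩ := hy
  refine ⟨_, _, isArcOrPt_image_Icc_zero hf u, isArcOrPt_image_Icc_zero hf v, ?_⟩
  rcases le_total u v with huv | hvu
  exacts [Or.inl (image_mono (Icc_subset_Icc_right huv)),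
    Or.inr (image_mono (Icc_subset_Icc_right hvu))]

theorem IsArcWith.subset_of_mem (hX : HereditarilyUnicoherent X) (hA : IsArcWith A p q)
    {L : Set X} (hL : IsCompact L) (hL' : IsPreconnected L) (hp : p ∈ L) (hq : q ∈ L) :
    A ⊆ L := by
  obtain ⟨f, hf, rfl, rfl, rfl⟩ := hA.exists_isEmbedding
  have hpre : IsPreconnected (f ⁻¹' L) := by
    refine hf.isInducing.isPreconnected_image.1 ?_
    rw [image_preimage_eq_range_inter]
    exact hX _ _ ⟨isCompact_range hf.continuous, isConnected_range hf.continuous⟩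
      ⟨hL, ⟨_, hp⟩, hL'⟩
  rintro _ ⟨u, rfl⟩
  exact hpre.Icc_subset hp hq ⟨unitInterval.nonneg', unitInterval.le_one'⟩

end Arcs

section OrderOfPoints

variable {X : Type*} [TopologicalSpace X] {p : X}

theorem OrderGe.of_le {m n : ℕ} (hmn : m ≤ n) (h : OrderGe X p n) : OrderGe X p m := by
  obtain ⟨F, hF, hFp⟩ := h
  exact ⟨fun i => F (i.castLE hmn), fun i => hF _,
    fun i j hij => hFp _ _ ((Fin.castLE_injective hmn).ne hij)⟩

theorem orderGe_two_of_isArcWith {A₁ A₂ : Set X} {q₁ q₂ : X} (h₁ : IsArcWith A₁ p q₁)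
    (h₂ : IsArcWith A₂ p q₂) (h₁₂ : A₁ ∩ A₂ ⊆ {p}) : OrderGe X p 2 := by
  have := h₁₂.antisymm (singleton_subset_iff.2 ⟨h₁.left_mem, h₂.left_mem⟩)
  refine ⟨![A₁, A₂], fun i => ?_, fun i j hij => ?_⟩
  · fin_cases i
    exacts [⟨q₁, h₁⟩, ⟨q₂, h₂⟩]
  · fin_cases i <;> fin_cases j <;> simp_all [inter_comm]

theorem orderGe_three_of_isArcWith {A₁ A₂ A₃ : Set X} {q₁ q₂ q₃ : X}
    (h₁ : IsArcWith A₁ p q₁) (h₂ : IsArcWith A₂ p q₂) (h₃ : IsArcWith A₃ p q₃)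
    (h₁₂ : A₁ ∩ A₂ ⊆ {p}) (h₁₃ : A₁ ∩ A₃ ⊆ {p}) (h₂₃ : A₂ ∩ A₃ ⊆ {p}) : OrderGe X p 3 := by
  have := h₁₂.antisymm (singleton_subset_iff.2 ⟨h₁.left_mem, h₂.left_mem⟩)
  have := h₁₃.antisymm (singleton_subset_iff.2 ⟨h₁.left_mem, h₃.left_mem⟩)
  have := h₂₃.antisymm (singleton_subset_iff.2 ⟨h₂.left_mem, h₃.left_mem⟩)
  refine ⟨![A₁, A₂, A₃], fun i => ?_, fun i j hij => ?_⟩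
  · fin_cases i
    exacts [⟨q₁, h₁⟩, ⟨q₂, h₂⟩, ⟨q₃, h₃⟩]
  · fin_cases i <;> fin_cases j <;> simp_all [inter_comm]

theorem IsArcWith.orderGe_three {B D : Set X} {q r z : X} (hB : IsArcWith B p q) (hr : r ∈ B)
    (hrp : r ≠ p) (hrq : r ≠ q) (hD : IsArcWith D r z) (hBD : B ∩ D ⊆ {r}) :
    OrderGe X r 3 := by
  obtain ⟨g, hg, rfl, rfl, rfl⟩ := hB.exists_isEmbedding
  obtain ⟨d, rfl⟩ := hr
  have hd0 : 0 < d := unitInterval.nonneg'.lt_of_ne (by rintro rfl; exact hrp rfl)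
  have hd1 : d < 1 := unitInterval.le_one'.lt_of_ne (by rintro rfl; exact hrq rfl)
  have hsplit : g '' Icc 0 d ∩ g '' Icc d 1 ⊆ {g d} := by
    rw [← image_inter hg.injective, Icc_inter_Icc_eq_singleton hd0.le hd1.le, image_singleton]
  have hleg (s : Set I) : g '' s ∩ D ⊆ {g d} :=
    (inter_subset_inter_left _ (image_subset_range _ _)).trans hBD
  exact orderGe_three_of_isArcWith (isArcWith_image_Icc hg hd0).symm
    (isArcWith_image_Icc hg hd1) hD hsplit (hleg _) (hleg _)

theorem IsArcWith.inter_eq_singleton_of_notMem [T2Space X] {t e z : X} {B Z : Set X}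
    (hram : ramificationPoints X ⊆ {t}) (he : ¬ OrderGe X e 2) (hB : IsArcWith B t e)
    (hZ : IsArcWith Z t z) (hz : z ∉ B) : B ∩ Z = {t} := by
  obtain ⟨f, hf, rfl, rfl, rfl⟩ := hZ.exists_isEmbedding
  obtain ⟨c, hcB, hmax⟩ := ((hB.isCompact.isClosed.preimage hf.continuous).isCompact
    (X := I)).exists_isGreatest ⟨0, hB.left_mem⟩
  suffices hc : c = 0 by
    refine Subset.antisymm ?_ (singleton_subset_iff.2 ⟨hB.left_mem, mem_range_self 0⟩)
    rintro _ ⟨hxB, u, rfl⟩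
    rw [mem_singleton_iff, le_antisymm ((hmax hxB).trans_eq hc) unitInterval.nonneg']
  by_contra hc0
  have hc1 : c < 1 := unitInterval.le_one'.lt_of_ne (by rintro rfl; exact hz hcB)
  have hD : IsArcWith (f '' Icc c 1) (f c) (f 1) := isArcWith_image_Icc hf hc1
  have hBD : B ∩ f '' Icc c 1 ⊆ {f c} := by
    rintro _ ⟨hxB, u, hu, rfl⟩
    rw [le_antisymm (hmax hxB) hu.1]
    rfl
  have hct : f c ≠ f 0 := hf.injective.ne hc0
  by_cases hce : f c = e
  · subst hce
    exact he (orderGe_two_of_isArcWith hB.symm hD hBD)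
  · exact hct (hram (hB.orderGe_three hcB hct hce hD hBD))

end OrderOfPoints

section Hausdorff

variable {X : Type*} [MetricSpace X]

theorem IsArcOrPt.hausdorffEDist_ne_top {A B : Set X} {p q p' q' : X} (hA : IsArcOrPt A p q)
    (hB : IsArcOrPt B p' q') : hausdorffEDist A B ≠ ⊤ :=
  hausdorffEDist_ne_top_of_nonempty_of_bounded ⟨p, hA.left_mem⟩ ⟨p', hB.left_mem⟩
    hA.isCompact.isBounded hB.isCompact.isBounded

theorem mem_of_frequently_mem_of_tendsto_hausdorffDist {K : ℕ → Set X} {L : Set X}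
    (hL : IsClosed L) (hfin : ∀ n, hausdorffEDist (K n) L ≠ ⊤)
    (hKL : Tendsto (fun n => hausdorffDist (K n) L) atTop (𝓝 0)) {x : ℕ → X} {y : X}
    (hx : ∃ᶠ n in atTop, x n ∈ K n) (hxy : Tendsto x atTop (𝓝 y)) : y ∈ L := by
  refine hL.closure_subset (Metric.mem_closure_iff.2 fun ε hε => ?_)
  obtain ⟨n, hxn, hyn, hdn⟩ := (hx.and_eventually ((hxy.eventually (ball_mem_nhds y
    (half_pos hε))).and (hKL.eventually (gt_mem_nhds (half_pos hε))))).exists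
  obtain ⟨b, hbL, hb⟩ := exists_dist_lt_of_hausdorffDist_lt hxn hdn (hfin n)
  exact ⟨b, hbL, by linarith [dist_triangle y (x n) b, mem_ball'.1 hyn]⟩

theorem mem_of_tendsto_nonemptyCompacts {K : ℕ → NonemptyCompacts X} {L : NonemptyCompacts X}
    (hKL : Tendsto K atTop (𝓝 L)) {x : ℕ → X} {y : X} (hx : ∀ n, x n ∈ K n)
    (hxy : Tendsto x atTop (𝓝 y)) : y ∈ L :=
  mem_of_frequently_mem_of_tendsto_hausdorffDist L.isCompact.isClosed
    (fun n => edist_ne_top (K n) L) (tendsto_iff_dist_tendsto_zero.1 hKL)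
    (Frequently.of_forall hx) hxy

theorem exists_tendsto_of_mem_of_tendsto_nonemptyCompacts {K : ℕ → NonemptyCompacts X}
    {L : NonemptyCompacts X} (hKL : Tendsto K atTop (𝓝 L)) {y : X} (hy : y ∈ L) :
    ∃ x : ℕ → X, (∀ n, x n ∈ K n) ∧ Tendsto x atTop (𝓝 y) := by
  choose x hxK hx using fun n => (K n).isCompact.exists_infDist_eq_dist (K n).nonempty y
  refine ⟨x, hxK, tendsto_iff_dist_tendsto_zero.2 <| squeeze_zero (fun _ => dist_nonneg)
    (fun n => ?_) (tendsto_iff_dist_tendsto_zero.1 hKL)⟩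
  rw [dist_comm, ← hx n, NonemptyCompacts.dist_eq, hausdorffDist_comm]
  exact infDist_le_hausdorffDist_of_mem hy (edist_ne_top L (K n))

theorem isPreconnected_of_tendsto_nonemptyCompacts {K : ℕ → NonemptyCompacts X}
    {L : NonemptyCompacts X} (hKL : Tendsto K atTop (𝓝 L))
    (hK : ∀ n, IsPreconnected (K n : Set X)) : IsPreconnected (L : Set X) := by
  rw [isPreconnected_closed_iff]
  intro P Q hP hQ hLPQ hLP hLQ
  by_contra hLPQ'
  have hdisj : Disjoint ((L : Set X) ∩ P) (L ∩ Q) := by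
    rw [disjoint_iff_inter_eq_empty, ← inter_inter_distrib_left]
    exact not_nonempty_iff_eq_empty.1 hLPQ'
  obtain ⟨δ, hδ, hsep⟩ := hdisj.exists_thickenings (L.isCompact.inter_right hP)
    (L.isCompact.isClosed.inter hQ)
  obtain ⟨n, hn⟩ := ((tendsto_iff_dist_tendsto_zero.1 hKL).eventually (gt_mem_nhds hδ)).exists
  have hn' : hausdorffDist (L : Set X) (K n) < δ := by
    rwa [hausdorffDist_comm, ← NonemptyCompacts.dist_eq]
  have hcover : (K n : Set X) ⊆ thickening δ (L ∩ P) ∪ thickening δ (L ∩ Q) := by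
    intro x hx
    obtain ⟨y, hyL, hxy⟩ := exists_dist_lt_of_hausdorffDist_lt hx hn (edist_ne_top (K n) L)
    exact (hLPQ hyL).imp (fun hyP => mem_thickening_iff.2 ⟨y, ⟨hyL, hyP⟩, hxy⟩)
      (fun hyQ => mem_thickening_iff.2 ⟨y, ⟨hyL, hyQ⟩, hxy⟩)
  have hmeets {S : Set X} (hLS : ((L : Set X) ∩ S).Nonempty) :
      ((K n : Set X) ∩ thickening δ (L ∩ S)).Nonempty := by
    obtain ⟨y, hy⟩ := hLS
    obtain ⟨x, hxK, hxy⟩ := exists_dist_lt_of_hausdorffDist_lt hy.1 hn' (edist_ne_top L (K n))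
    exact ⟨x, hxK, mem_thickening_iff.2 ⟨y, hy, by rwa [dist_comm]⟩⟩
  obtain ⟨x, -, hxP, hxQ⟩ := hK n _ _ isOpen_thickening isOpen_thickening hcover (hmeets hLP)
    (hmeets hLQ)
  exact disjoint_left.1 hsep hxP hxQ

end Hausdorff

section Fan

variable {X : Type*} [MetricSpace X] {t : X}

theorem mem_or_mem_of_smoothAt {α : ℕ → X} {K : ℕ → NonemptyCompacts X} {L : NonemptyCompacts X}
    (hKL : Tendsto K atTop (𝓝 L)) (hK : ∀ n, IsArcOrPt (K n : Set X) t (α n)) {s s' : X}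
    (hs : s ∈ L) (hs' : s' ∈ L) (hsm : SmoothAt X t s) (hsm' : SmoothAt X t s')
    {P Q : Set X} (hP : IsArcOrPt P t s) (hQ : IsArcOrPt Q t s') : s ∈ Q ∨ s' ∈ P := by
  obtain ⟨b, hbK, hb⟩ := exists_tendsto_of_mem_of_tendsto_nonemptyCompacts hKL hs
  obtain ⟨b', hb'K, hb'⟩ := exists_tendsto_of_mem_of_tendsto_nonemptyCompacts hKL hs'
  choose C D hC hD hCD using fun n => (hK n).exists_nested_subarcs (hbK n) (hb'K n)
  rcases frequently_or_distrib.1 (Frequently.of_forall (f := atTop) hCD) with hCD | hDC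
  · exact Or.inl <| mem_of_frequently_mem_of_tendsto_hausdorffDist hQ.isCompact.isClosed
      (fun n => (hD n).hausdorffEDist_ne_top hQ) (hsm' b' D Q hb' hD hQ)
      (hCD.mono fun n h => h (hC n).right_mem) hb
  · exact Or.inr <| mem_of_frequently_mem_of_tendsto_hausdorffDist hP.isCompact.isClosed
      (fun n => (hC n).hausdorffEDist_ne_top hP) (hsm b C P hb hC hP)
      (hDC.mono fun n h => h (hD n).right_mem) hb'

theorem IsFanWithTop.hausdorffLimit_eq_arc (hX : IsFanWithTop X t)
    (h : ∀ x : X, x ≠ t → ∀ A : Set X, IsArcWith A t x →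
      ((A \ {t, x}) ∩ smoothSet X t).Nonempty)
    {e : X} (he : ¬ OrderGe X e 2) {B : Set X} (hB : IsArcWith B t e) {α : ℕ → X}
    {K : ℕ → NonemptyCompacts X} {L : NonemptyCompacts X} (hα : Tendsto α atTop (𝓝 e))
    (hK : ∀ n, IsArcOrPt (K n : Set X) t (α n)) (hKL : Tendsto K atTop (𝓝 L)) :
    (L : Set X) = B := by
  obtain ⟨⟨-, -, harc, hHU⟩, hram⟩ := hX
  have htL := mem_of_tendsto_nonemptyCompacts hKL (fun n => (hK n).left_mem) tendsto_const_nhds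
  have heL := mem_of_tendsto_nonemptyCompacts hKL (fun n => (hK n).right_mem) hα
  have hLconn := isPreconnected_of_tendsto_nonemptyCompacts hKL fun n => (hK n).isPreconnected
  have hBL := hB.subset_of_mem hHU L.isCompact hLconn htL heL
  refine Subset.antisymm (fun z hzL => ?_) hBL
  by_contra hzB
  have hzt : z ≠ t := by
    rintro rfl
    exact hzB hB.left_mem
  obtain ⟨Z, hZ⟩ := harc t z hzt.symm
  have hZL := hZ.subset_of_mem hHU L.isCompact hLconn htL hzL
  have hBZ := hB.inter_eq_singleton_of_notMem hram.subset he hZ hzB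
  obtain ⟨s, ⟨hsB, hs⟩, hsm⟩ := h e hB.ne.symm B hB
  obtain ⟨s', ⟨hs'Z, hs'⟩, hs'm⟩ := h z hzt Z hZ
  obtain ⟨P, hPB, hP⟩ := hB.exists_subarc hsB
  obtain ⟨Q, hQZ, hQ⟩ := hZ.exists_subarc hs'Z
  rcases mem_or_mem_of_smoothAt hKL hK (hBL hsB) (hZL hs'Z) hsm hs'm hP hQ with hsQ | hs'P
  · exact hs (Or.inl (hBZ.subset ⟨hsB, hQZ hsQ⟩))
  · exact hs' (Or.inl (hBZ.subset ⟨hPB hs'P, hs'Z⟩))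

end Fan

/-- Let `X` be a fan with top `t`. If for each `x ∈ X − {t}` we have
`(tx) ∩ S(X) ≠ ∅` (where `(tx) = tx − {t,x}` for the unique arc `tx`), then
`E(X) ⊆ S(X)`. -/
theorem endpoints_subset_smoothSet
    (X : Type*) [MetricSpace X] (t : X)
    (hX : IsFanWithTop X t)
    (h : ∀ x : X, x ≠ t → ∀ A : Set X, IsArcWith A t x →
      ((A \ {t, x}) ∩ smoothSet X t).Nonempty) :
    endpoints X ⊆ smoothSet X t := by
  have : CompactSpace X := hX.1.1
  rintro e ⟨-, he⟩ α A B hα hA hB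
  have het : e ≠ t := by
    rintro rfl
    exact he (OrderGe.of_le (by norm_num) (hX.2.ge rfl))
  have hB' : IsArcWith B t e := hB.resolve_left fun hpt => het hpt.1.symm
  let K : ℕ → NonemptyCompacts X := fun n =>
    ⟨⟨A n, (hA n).isCompact⟩, ⟨t, (hA n).left_mem⟩⟩
  let L : NonemptyCompacts X := ⟨⟨B, hB'.isCompact⟩, ⟨t, hB'.left_mem⟩⟩
  suffices Tendsto K atTop (𝓝 L) from tendsto_iff_dist_tendsto_zero.1 this
  refine tendsto_nhds_of_unique_mapClusterPt fun M hM => ?_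
  obtain ⟨ψ, hψ, hKM⟩ := hM.tendsto_subseq
  exact NonemptyCompacts.ext (hX.hausdorffLimit_eq_arc h he hB'
    (hα.comp hψ.tendsto_atTop) (fun n => hA (ψ n)) hKM)

end FansHomogeneity
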